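/- Let t₀ ≥ 0, and let g, x, y : [t₀, ∞) → ℝ be continuous with x ≥ 0 and y ≥ 0 and g > 0. Assume that for all t₀ ≤ τ₁ < τ₂: x(τ₂) + ∫_{τ₁}^{τ₂} g(τ)^{2α} x(τ) dτ ≤ x(τ₁) + ∫_{τ₁}^{τ₂} y(τ) dτ. Then for all t > t₀: x(t) · exp(∫_{t₀}^t g(τ)^{2α} dτ) ≤ x(t₀) + ∫_{t₀}^t exp(∫_{t₀}^τ g(τ')^{2α} dτ') y(τ) dτ. -/

import Mathlib

/-!
Let `G(s) = ∫_{t₀}^s g^{2α}`. The claim is that `E(s) = x(s) e^{G(s)} - ∫_{t₀}^s e^{G} y` is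
nonincreasing. At each `τ`, multiplying the hypothesis on `[τ, s]` by `e^{G(s)}` bounds the
increment of `E` on `[τ, s]` by that of the differentiable function
`φ(s) = e^{G(s)} (x(τ) + ∫_τ^s (y - g^{2α} x)) - ∫_{t₀}^s e^{G} y`, whose right derivative at `τ`
vanishes. So the upper right Dini derivative of the continuous function `E` is `≤ 0` everywhere,
and `E` is nonincreasing; no differentiability of `x` is needed.
-/

open MeasureTheory intervalIntegral Set Filter Topology

theorem image_le_of_right_increment_le_of_deriv_nonpos {f : ℝ → ℝ} {a b : ℝ}
    (hf : ContinuousOn f (Icc a b))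
    (hdom : ∀ τ ∈ Ico a b, ∃ (φ : ℝ → ℝ) (φ' : ℝ), HasDerivWithinAt φ φ' (Ici τ) τ ∧ φ' ≤ 0 ∧
      ∀ᶠ s in 𝓝[>] τ, f s - f τ ≤ φ s - φ τ) :
    ∀ s ∈ Icc a b, f s ≤ f a := by
  refine image_le_of_liminf_slope_right_le_deriv_boundary hf (B' := fun _ => 0) le_rfl
    continuousOn_const (fun τ _ => hasDerivWithinAt_const τ _ (f a)) ?_
  intro τ hτ r hr
  obtain ⟨φ, φ', hφ, hφ', hle⟩ := hdom τ hτ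
  have hslope : Tendsto (slope φ τ) (𝓝[>] τ) (𝓝 φ') :=
    (hasDerivWithinAt_iff_tendsto_slope' (lt_irrefl τ)).1 (hφ.mono Ioi_subset_Ici_self)
  have hφr : ∀ᶠ s in 𝓝[>] τ, slope φ τ s < r := hslope.eventually_lt_const (hφ'.trans_lt hr)
  refine (hφr.and (hle.and self_mem_nhdsWithin)).mono ?_ |>.frequently
  rintro s ⟨hφs, hfs, hτs⟩
  rw [slope_def_field] at hφs ⊢
  exact (div_le_div_of_nonneg_right hfs (sub_pos.2 hτs).le).trans_lt hφs

namespace ContinuousOn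

variable {f : ℝ → ℝ} {a : ℝ}

theorem hasDerivWithinAt_primitive_Ici (hf : ContinuousOn f (Ici a)) {τ : ℝ} (hτ : a ≤ τ) :
    HasDerivWithinAt (fun s => ∫ u in a..s, f u) (f τ) (Ici τ) τ :=
  have hfτ : ContinuousOn f (Ici τ) := hf.mono (Ici_subset_Ici.2 hτ)
  integral_hasDerivWithinAt_right ((hf.mono Icc_subset_Ici_self).intervalIntegrable_of_Icc hτ)
    ((hfτ.mono Ioi_subset_Ici_self).stronglyMeasurableAtFilter_nhdsWithin measurableSet_Ioi τ)
    ((hfτ τ self_mem_Ici).mono Ioi_subset_Ici_self)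

theorem continuousOn_primitive_Ici (hf : ContinuousOn f (Ici a)) :
    ContinuousOn (fun s => ∫ u in a..s, f u) (Ici a) := by
  intro s hs
  have hab : a ≤ s + 1 := by linarith [mem_Ici.1 hs]
  have hIcc : ContinuousOn (fun s => ∫ u in a..s, f u) (Icc a (s + 1)) := by
    rw [← uIcc_of_le hab]
    exact continuousOn_primitive_interval
      ((hf.mono Icc_subset_Ici_self).integrableOn_Icc.mono_set (uIcc_of_le hab).subset)
  refine (hIcc s ⟨hs, by linarith⟩).mono_of_mem_nhdsWithin ?_
  rw [← Ici_inter_Iic]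
  exact inter_mem_nhdsWithin _ (Iic_mem_nhds (lt_add_one s))

end ContinuousOn

open Real in
theorem mul_exp_integral_le_of_increment_le {w x y : ℝ → ℝ} {t₀ t : ℝ} (ht : t₀ ≤ t)
    (hw : ContinuousOn w (Ici t₀)) (hx : ContinuousOn x (Ici t₀)) (hy : ContinuousOn y (Ici t₀))
    (hineq : ∀ τ₁ τ₂, t₀ ≤ τ₁ → τ₁ < τ₂ →
      x τ₂ + ∫ τ in τ₁..τ₂, w τ * x τ ≤ x τ₁ + ∫ τ in τ₁..τ₂, y τ) :
    x t * exp (∫ τ in t₀..t, w τ) ≤ x t₀ + ∫ τ in t₀..t, exp (∫ τ' in t₀..τ, w τ') * y τ := by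
  set G := fun s => ∫ u in t₀..s, w u
  set P := fun s => ∫ u in t₀..s, exp (G u) * y u
  have hGc : ContinuousOn G (Ici t₀) := hw.continuousOn_primitive_Ici
  have hEy : ContinuousOn (fun u => exp (G u) * y u) (Ici t₀) := hGc.rexp.mul hy
  have hwx : ContinuousOn (fun u => w u * x u) (Ici t₀) := hw.mul hx
  have hE : ContinuousOn (fun s => x s * exp (G s) - P s) (Ici t₀) :=
    (hx.mul hGc.rexp).sub hEy.continuousOn_primitive_Ici
  suffices x t * exp (G t) - P t ≤ x t₀ * exp (G t₀) - P t₀ by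
    simp only [G, P, integral_same, exp_zero, mul_one, sub_zero] at this
    linarith
  refine image_le_of_right_increment_le_of_deriv_nonpos (hE.mono Icc_subset_Ici_self) ?_
    t ⟨ht, le_rfl⟩
  intro τ ⟨hτ, _⟩
  have hτ' : Ici τ ⊆ Ici t₀ := Ici_subset_Ici.2 hτ
  have hφ : HasDerivWithinAt
      (fun s => exp (G s) * (x τ + ((∫ u in τ..s, y u) - ∫ u in τ..s, w u * x u)) - P s)
      (exp (G τ) * w τ * (x τ + ((∫ u in τ..τ, y u) - ∫ u in τ..τ, w u * x u)) +
        exp (G τ) * (y τ - w τ * x τ) - exp (G τ) * y τ) (Ici τ) τ :=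
    ((hw.hasDerivWithinAt_primitive_Ici hτ).exp.mul
      ((((hy.mono hτ').hasDerivWithinAt_primitive_Ici le_rfl).sub
        ((hwx.mono hτ').hasDerivWithinAt_primitive_Ici le_rfl)).const_add (x τ))).sub
      (hEy.hasDerivWithinAt_primitive_Ici hτ)
  refine ⟨_, _, hφ, ?_, ?_⟩
  · simp only [integral_same, sub_zero, add_zero]
    exact le_of_eq (by ring)
  · filter_upwards [self_mem_nhdsWithin] with s hs
    have hxs := mul_le_mul_of_nonneg_left (hineq τ s hτ hs) (exp_pos (G s)).le
    simp only [integral_same, sub_zero, add_zero]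
    linarith

theorem gronwall_integral_general (α t₀ : ℝ) (hα : 0 < α)
    (g x y : ℝ → ℝ)
    (hg : ContinuousOn g (Set.Ici t₀)) (hx : ContinuousOn x (Set.Ici t₀))
    (hy : ContinuousOn y (Set.Ici t₀))
    (hineq : ∀ τ₁ τ₂ : ℝ, t₀ ≤ τ₁ → τ₁ < τ₂ →
      x τ₂ + ∫ τ in τ₁..τ₂, g τ ^ (2*α) * x τ ≤ x τ₁ + ∫ τ in τ₁..τ₂, y τ) :
    ∀ t : ℝ, t₀ < t →
      x t * Real.exp (∫ τ in t₀..t, g τ ^ (2*α)) ≤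
        x t₀ + ∫ τ in t₀..t, Real.exp (∫ τ' in t₀..τ, g τ' ^ (2*α)) * y τ :=
  fun _ ht => mul_exp_integral_le_of_increment_le ht.le
    (hg.rpow_const fun _ _ => Or.inr (by positivity)) hx hy hineq

/-- Integral Grönwall-type lemma (Lemma 5.3): if continuous functions `g > 0`, `x ≥ 0`,
`y ≥ 0` on `[t₀, ∞)` satisfy
`x(τ₂) + ∫_{τ₁}^{τ₂} g^{2α} x ≤ x(τ₁) + ∫_{τ₁}^{τ₂} y` for all `t₀ ≤ τ₁ < τ₂`, then
`x(t) e^{∫_{t₀}^t g^{2α}} ≤ x(t₀) + ∫_{t₀}^t e^{∫_{t₀}^τ g^{2α}} y(τ) dτ` for all `t > t₀`. -/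
theorem gronwall_integral (α t₀ : ℝ) (hα : 0 < α) (ht₀ : 0 ≤ t₀)
    (g x y : ℝ → ℝ)
    (hg : ContinuousOn g (Set.Ici t₀)) (hx : ContinuousOn x (Set.Ici t₀))
    (hy : ContinuousOn y (Set.Ici t₀))
    (hgpos : ∀ t ∈ Set.Ici t₀, 0 < g t)
    (hxnonneg : ∀ t ∈ Set.Ici t₀, 0 ≤ x t)
    (hynonneg : ∀ t ∈ Set.Ici t₀, 0 ≤ y t)
    (hineq : ∀ τ₁ τ₂ : ℝ, t₀ ≤ τ₁ → τ₁ < τ₂ →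
      x τ₂ + ∫ τ in τ₁..τ₂, g τ ^ (2*α) * x τ ≤ x τ₁ + ∫ τ in τ₁..τ₂, y τ) :
    ∀ t : ℝ, t₀ < t →
      x t * Real.exp (∫ τ in t₀..t, g τ ^ (2*α)) ≤
        x t₀ + ∫ τ in t₀..t, Real.exp (∫ τ' in t₀..τ, g τ' ^ (2*α)) * y τ :=
  gronwall_integral_general α t₀ hα g x y hg hx hy hineq
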